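/- For every critical subset J ⊆ {1,…,N}, the complex moment map μ_ℂ is constant on C_J with value −β_J^⊥. Consequently, if β is generic in the sense that β_J^⊥ ≠ β_{J′}^⊥ for all distinct critical subsets J ≠ J′, then the sets C_J, as J ranges over the critical subsets, are pairwise disjoint. -/

import Mathlib

noncomputable section

/-- `T*ℂᴺ = ℂᴺ × ℂᴺ` with its L² (Hermitian) norm. -/
abbrev HypPhase (N : ℕ) := WithLp 2 (EuclideanSpace ℂ (Fin N) × EuclideanSpace ℂ (Fin N))

/-- The inclusion `ℝᴺ ⊆ ℂᴺ`. -/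
def toC {N : ℕ} (v : EuclideanSpace ℝ (Fin N)) : EuclideanSpace ℂ (Fin N) :=
  (WithLp.equiv 2 (Fin N → ℂ)).symm fun i => ((WithLp.equiv 2 (Fin N → ℝ) v) i : ℂ)

/-- `J` is a critical subset for the family of weights `u`: `u i` lies in the span of
`{u j : j ∈ J}` iff `i ∈ J`. -/
def IsCriticalSubset {N : ℕ} (u : Fin N → EuclideanSpace ℝ (Fin N))
    (J : Set (Fin N)) : Prop :=
  ∀ i, u i ∈ Submodule.span ℝ (u '' J) ↔ i ∈ J

/-- The subset `C_J` of `T*ℂᴺ` associated to a critical subset `J`. -/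
def CJ {N : ℕ} (u : Fin N → EuclideanSpace ℝ (Fin N))
    (μC : HypPhase N → EuclideanSpace ℂ (Fin N)) (J : Set (Fin N)) :
    Set (HypPhase N) :=
  {p | (∀ i ∈ J, (inner ℂ (toC (u i)) (μC p) : ℂ) = 0) ∧
       (∀ j ∉ J, p.ofLp.1 j = 0 ∧ p.ofLp.2 j = 0)}

/-- `β_J^⊥ = β - P_J β`, where `P_J` is the orthogonal projection of `ℂᴺ` onto the
complex span of `{u_j : j ∈ J}`. -/
def betaJperp {N : ℕ} (u : Fin N → EuclideanSpace ℝ (Fin N))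
    (β : EuclideanSpace ℂ (Fin N)) (J : Set (Fin N)) : EuclideanSpace ℂ (Fin N) :=
  β - (Submodule.orthogonalProjectionOnto (Submodule.span ℂ ((fun j => toC (u j)) '' J)) β :
    EuclideanSpace ℂ (Fin N))

open Submodule

theorem Submodule.mem_orthogonal_span_of_forall_inner_eq_zero {𝕜 E : Type*} [RCLike 𝕜]
    [NormedAddCommGroup E] [InnerProductSpace 𝕜 E] {s : Set E} {v : E}
    (h : ∀ u ∈ s, inner 𝕜 u v = 0) : v ∈ (span 𝕜 s)ᗮ :=
  (isOrtho_span.2 fun _ hv _ hu => by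
    rw [Set.mem_singleton_iff.1 hv, inner_eq_zero_symm]
    exact h _ hu : span 𝕜 {v} ⟂ span 𝕜 s) (mem_span_singleton_self v)

theorem Submodule.sum_smul_mem_span_image {ι R M : Type*} [Fintype ι] [Semiring R]
    [AddCommMonoid M] [Module R M] {f : ι → R} {v : ι → M} {J : Set ι}
    (hf : ∀ j ∉ J, f j = 0) : ∑ j, f j • v j ∈ span R (v '' J) := by
  refine sum_mem fun j _ => ?_
  by_cases hj : j ∈ J
  · exact smul_mem _ _ (subset_span ⟨j, hj, rfl⟩)
  · simp [hf j hj]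

section MomentMap

variable {N : ℕ} {u : Fin N → EuclideanSpace ℝ (Fin N)} {β : EuclideanSpace ℂ (Fin N)}
  {μC : HypPhase N → EuclideanSpace ℂ (Fin N)}

/- On `C_J` the moment map is `s - β` with `s` in the span `S` of the `u j`, `j ∈ J`, and is
orthogonal to `S`; hence `s` is the orthogonal projection of `β` onto `S`. -/
theorem moment_map_eq_neg_betaJperp_of_mem_CJ
    (hμC : ∀ p : HypPhase N, μC p = (∑ j, (p.ofLp.1 j * p.ofLp.2 j) • toC (u j)) - β)
    {J : Set (Fin N)} {p : HypPhase N} (hp : p ∈ CJ u μC J) :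
    μC p = -betaJperp u β J := by
  obtain ⟨h_inner, h_zero⟩ := hp
  set S := span ℂ ((fun j => toC (u j)) '' J)
  set s := ∑ j, (p.ofLp.1 j * p.ofLp.2 j) • toC (u j)
  have hs : s ∈ S := sum_smul_mem_span_image fun j hj => by rw [(h_zero j hj).1, zero_mul]
  have hμ : μC p ∈ Sᗮ :=
    mem_orthogonal_span_of_forall_inner_eq_zero fun _ ⟨i, hi, hw⟩ => hw ▸ h_inner i hi
  have hproj : S.starProjection β = s :=
    eq_starProjection_of_mem_orthogonal hs <| by
      rw [show β - s = -μC p by rw [hμC p]; abel]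
      exact neg_mem hμ
  rw [hμC p, betaJperp, ← starProjection_apply, hproj]
  abel

theorem CJ_inter_CJ_eq_empty_of_betaJperp_ne
    (hμC : ∀ p : HypPhase N, μC p = (∑ j, (p.ofLp.1 j * p.ofLp.2 j) • toC (u j)) - β)
    {J J' : Set (Fin N)} (hβ : betaJperp u β J ≠ betaJperp u β J') :
    CJ u μC J ∩ CJ u μC J' = ∅ :=
  Set.eq_empty_of_forall_notMem fun _ ⟨hp, hp'⟩ => hβ <| neg_injective <|
    (moment_map_eq_neg_betaJperp_of_mem_CJ hμC hp).symm.trans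
      (moment_map_eq_neg_betaJperp_of_mem_CJ hμC hp')

end MomentMap

theorem stmt16_general (N : ℕ)
    (u : Fin N → EuclideanSpace ℝ (Fin N))
    (β : EuclideanSpace ℂ (Fin N))
    (μC : HypPhase N → EuclideanSpace ℂ (Fin N))
    (hμC : ∀ p : HypPhase N, μC p = (∑ j, (p.ofLp.1 j * p.ofLp.2 j) • toC (u j)) - β) :
    (∀ J : Set (Fin N), IsCriticalSubset u J →
      ∀ p ∈ CJ u μC J, μC p = -(betaJperp u β J)) ∧
    ((∀ J J' : Set (Fin N), IsCriticalSubset u J → IsCriticalSubset u J' → J ≠ J' →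
        betaJperp u β J ≠ betaJperp u β J') →
      ∀ J J' : Set (Fin N), IsCriticalSubset u J → IsCriticalSubset u J' → J ≠ J' →
        CJ u μC J ∩ CJ u μC J' = ∅) :=
  ⟨fun _ _ _ hp => moment_map_eq_neg_betaJperp_of_mem_CJ hμC hp,
    fun hgen J J' hJ hJ' hne => CJ_inter_CJ_eq_empty_of_betaJperp_ne hμC (hgen J J' hJ hJ' hne)⟩

/-- The complex moment map is constant on each `C_J`, equal to
`−β_J^⊥`; consequently, for generic `β` the sets `C_J` are pairwise disjoint. -/
theorem stmt16 (N : ℕ) (𝔱 : Submodule ℝ (EuclideanSpace ℝ (Fin N)))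
    (u : Fin N → EuclideanSpace ℝ (Fin N))
    (hu : ∀ j, u j = (Submodule.orthogonalProjectionOnto 𝔱 (EuclideanSpace.single j 1) :
      EuclideanSpace ℝ (Fin N)))
    (β : EuclideanSpace ℂ (Fin N))
    (hβ : β ∈ Submodule.span ℂ (toC '' (𝔱 : Set (EuclideanSpace ℝ (Fin N)))))
    (μC : HypPhase N → EuclideanSpace ℂ (Fin N))
    (hμC : ∀ p : HypPhase N, μC p = (∑ j, (p.ofLp.1 j * p.ofLp.2 j) • toC (u j)) - β) :
    (∀ J : Set (Fin N), IsCriticalSubset u J →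
      ∀ p ∈ CJ u μC J, μC p = -(betaJperp u β J)) ∧
    ((∀ J J' : Set (Fin N), IsCriticalSubset u J → IsCriticalSubset u J' → J ≠ J' →
        betaJperp u β J ≠ betaJperp u β J') →
      ∀ J J' : Set (Fin N), IsCriticalSubset u J → IsCriticalSubset u J' → J ≠ J' →
        CJ u μC J ∩ CJ u μC J' = ∅) :=
  stmt16_general N u β μC hμC
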